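/- Let λ (length n) and μ (length n-2) be weakly decreasing sequences of nonnegative integers with μ doubly interlacing λ. Suppose additionally that the concatenated multiset {λ_i} ∪ {μ_j} has all 2n-2 entries distinct. Then there is a unique word w of length n-1 in the arrows {↘, ⇀, ⇁, ↗} (with the top/bottom state rules) such that the tiling determined by w, with pattern-block entries given by the weakly decreasing rearrangement (x₁,z₁,...,x_{n-1},z_{n-1}), places exactly the entries of λ on the top row and exactly the entries of μ on the bottom row. -/

import Mathlib

/-- `a` is a weakly decreasing sequence of length `k` (entries `a 0, …, a (k-1)`). -/
def WeaklyDecr (k : ℕ) (a : ℕ → ℤ) : Prop :=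
  ∀ i : ℕ, i + 1 < k → a (i + 1) ≤ a i

/-- The entries `a 0, …, a (k-1)` are nonnegative. -/
def NonnegSeq (k : ℕ) (a : ℕ → ℤ) : Prop :=
  ∀ i : ℕ, i < k → 0 ≤ a i

/-- `Interlaces k β α` : the length-`(k-1)` sequence `β` interlaces the length-`k`
sequence `α`, i.e. `α 0 ≥ β 0 ≥ α 1 ≥ β 1 ≥ ⋯ ≥ β (k-2) ≥ α (k-1)`. -/
def Interlaces (k : ℕ) (β α : ℕ → ℤ) : Prop :=
  ∀ i : ℕ, i + 1 < k → β i ≤ α i ∧ α (i + 1) ≤ β i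

/-- `μ` (length `n-2`) doubly interlaces `lam` (length `n`):
there is a weakly decreasing `κ` of length `n-1` with `μ ⊑ κ ⊑ lam`. -/
def DoublyInterlaces (n : ℕ) (μ lam : ℕ → ℤ) : Prop :=
  ∃ κ : ℕ → ℤ, WeaklyDecr (n - 1) κ ∧ Interlaces n κ lam ∧ Interlaces (n - 1) μ κ

/-- `s` is the weakly decreasing rearrangement
`(x₁, z₁, …, x_{n-1}, z_{n-1})` (with `x j = s (2*j)`, `z j = s (2*j+1)` in 0-based
indexing) of the concatenation of `lam` (length `n`) and `μ` (length `n-2`). -/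
def Rearr (n : ℕ) (lam μ s : ℕ → ℤ) : Prop :=
  WeaklyDecr (2 * n - 2) s ∧
    ((List.range (2 * n - 2)).map s).Perm
      (((List.range n).map lam) ++ ((List.range (n - 2)).map μ))

/-- The four arrows: down-right `↘`, harpoon-up `⇀`, harpoon-down `⇁`,
up-right `↗`. -/
inductive Arrow : Type
  | dr | hu | hd | ur
deriving DecidableEq

/-- The line on which an arrow starts (`true` = top line `y = 0`). -/
def startRow : Arrow → Bool
  | .dr => true
  | .hu => true
  | .hd => false
  | .ur => false

/-- The line on which an arrow ends (`true` = top line `y = 0`). -/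
def endRow : Arrow → Bool
  | .dr => false
  | .hu => true
  | .hd => false
  | .ur => true

/-- Entry access for a length-`k` word, with default `⇀` out of range. -/
def aget {k : ℕ} (a : Fin k → Arrow) (i : ℕ) : Arrow :=
  if h : i < k then a ⟨i, h⟩ else Arrow.hu

/-!
Because the `2n-2` entries are distinct, a tiling is determined by the row on which it places
each `s j`, and the two row conditions force that row: `s j` goes to the bottom exactly when it
is an entry of `μ`. This gives uniqueness, and existence amounts to checking that the forced
pattern is a path. Double interlacing `μ ⊑ κ ⊑ λ` gives, for every value `v`,
`#{i | v ≤ μ i} ≤ #{i | v ≤ λ i} ≤ #{i | v ≤ μ i} + 2`, while at `v = s (2k)` the two counts add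
up to `2k+1`. Hence exactly `k` of `s 0, …, s (2k)` are entries of `μ`: so `s 0` and `s (2n-3)`
lie on top and exactly one of `s (2i+1)`, `s (2i+2)` lies on the bottom, which are the start,
alternation and end conditions of the word.
-/

theorem List.perm_map_filter_range_two_mul {α : Type*} (f : ℕ → α) (g : ℕ → Bool) (m : ℕ) :
    (((List.range m).filter (fun i => g (2 * i))).map (fun i => f (2 * i)) ++
      ((List.range m).filter (fun i => g (2 * i + 1))).map (fun i => f (2 * i + 1))).Perm
      (((List.range (2 * m)).filter g).map f) := by
  classical
  induction m with
  | zero => simp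
  | succ m ih =>
    rw [List.perm_iff_count]
    intro x
    have := ih.count_eq x
    rw [show 2 * (m + 1) = 2 * m + 1 + 1 by ring]
    simp only [List.range_succ, List.filter_append, List.map_append, List.count_append] at this ⊢
    simp only [List.filter_cons, List.filter_nil]
    split_ifs <;> simp [List.count_cons] <;> omega

theorem List.Perm.filter_notMem_right {α : Type*} [DecidableEq α] {l X Y : List α}
    (h : l.Perm (X ++ Y)) (hXY : X.Disjoint Y) : (l.filter (fun x => !decide (x ∈ Y))).Perm X := by
  refine (h.filter _).trans ?_
  rw [List.filter_append, List.filter_eq_self.2 fun x hx => by simpa using hXY hx,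
    List.filter_eq_nil_iff.2 fun x hx => by simpa using hx, List.append_nil]

theorem List.Perm.filter_mem_right {α : Type*} [DecidableEq α] {l X Y : List α}
    (h : l.Perm (X ++ Y)) (hXY : X.Disjoint Y) : (l.filter (· ∈ Y)).Perm Y := by
  refine (h.filter _).trans ?_
  rw [List.filter_append, List.filter_eq_nil_iff.2 fun x hx => by simpa using hXY hx,
    List.filter_eq_self.2 fun x hx => by simpa using hx, List.nil_append]

namespace Arrow

def ofRows : Bool → Bool → Arrow
  | true, true => hu
  | true, false => dr
  | false, true => ur
  | false, false => hd

theorem eq_ofRows_iff {x : Arrow} {b c : Bool} :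
    x = ofRows b c ↔ startRow x = b ∧ endRow x = c := by
  cases x <;> cases b <;> cases c <;> decide

@[simp] theorem startRow_ofRows (b c : Bool) : startRow (ofRows b c) = b :=
  (eq_ofRows_iff.1 rfl).1

@[simp] theorem endRow_ofRows (b c : Bool) : endRow (ofRows b c) = c :=
  (eq_ofRows_iff.1 rfl).2

end Arrow

def wordOfRows (m : ℕ) (t : ℕ → Bool) : Fin m → Arrow :=
  fun i => Arrow.ofRows (t (2 * i)) (t (2 * i + 1))

theorem aget_of_lt {m : ℕ} (a : Fin m → Arrow) {i : ℕ} (hi : i < m) : aget a i = a ⟨i, hi⟩ :=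
  dif_pos hi

theorem aget_wordOfRows {m i : ℕ} (t : ℕ → Bool) (hi : i < m) :
    aget (wordOfRows m t) i = Arrow.ofRows (t (2 * i)) (t (2 * i + 1)) :=
  aget_of_lt _ hi

def topRow {m : ℕ} (a : Fin m → Arrow) (s : ℕ → ℤ) : List ℤ :=
  ((List.range m).filter (fun i => startRow (aget a i))).map (fun i => s (2 * i)) ++
    ((List.range m).filter (fun i => endRow (aget a i))).map (fun i => s (2 * i + 1))

def bottomRow {m : ℕ} (a : Fin m → Arrow) (s : ℕ → ℤ) : List ℤ :=
  ((List.range m).filter (fun i => !startRow (aget a i))).map (fun i => s (2 * i)) ++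
    ((List.range m).filter (fun i => !endRow (aget a i))).map (fun i => s (2 * i + 1))

-- `rowPattern a j` is the row (`true` = top) on which the tiling of `a` places `s j`.
def rowPattern {m : ℕ} (a : Fin m → Arrow) (j : ℕ) : Bool :=
  (if j % 2 = 0 then startRow else endRow) (aget a (j / 2))

theorem rowPattern_two_mul {m : ℕ} (a : Fin m → Arrow) (i : ℕ) :
    rowPattern a (2 * i) = startRow (aget a i) := by
  simp [rowPattern]

theorem rowPattern_two_mul_add_one {m : ℕ} (a : Fin m → Arrow) (i : ℕ) :
    rowPattern a (2 * i + 1) = endRow (aget a i) := by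
  simp [rowPattern, show (2 * i + 1) / 2 = i by omega]

theorem topRow_perm {m : ℕ} (a : Fin m → Arrow) (s : ℕ → ℤ) :
    (topRow a s).Perm (((List.range (2 * m)).filter (rowPattern a)).map s) := by
  simpa only [topRow, rowPattern_two_mul, rowPattern_two_mul_add_one] using
    List.perm_map_filter_range_two_mul s (rowPattern a) m

theorem bottomRow_perm {m : ℕ} (a : Fin m → Arrow) (s : ℕ → ℤ) :
    (bottomRow a s).Perm (((List.range (2 * m)).filter (fun j => !rowPattern a j)).map s) := by
  simpa only [bottomRow, rowPattern_two_mul, rowPattern_two_mul_add_one] using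
    List.perm_map_filter_range_two_mul s (fun j => !rowPattern a j) m

theorem eq_wordOfRows_iff {m : ℕ} (a : Fin m → Arrow) (t : ℕ → Bool) :
    a = wordOfRows m t ↔ ∀ j < 2 * m, rowPattern a j = t j := by
  constructor
  · rintro rfl j hj
    obtain ⟨i, rfl | rfl⟩ := Nat.even_or_odd' j
    · rw [rowPattern_two_mul, aget_wordOfRows t (by omega), Arrow.startRow_ofRows]
    · rw [rowPattern_two_mul_add_one, aget_wordOfRows t (by omega), Arrow.endRow_ofRows]
  · intro h
    funext i
    rw [wordOfRows, Arrow.eq_ofRows_iff, ← h _ (by omega), ← h _ (by omega), rowPattern_two_mul,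
      rowPattern_two_mul_add_one, aget_of_lt a i.isLt]
    exact ⟨rfl, rfl⟩

theorem map_filter_perm_iff {N : ℕ} {s : ℕ → ℤ} {X Y : List ℤ}
    (hperm : ((List.range N).map s).Perm (X ++ Y)) (hXY : X.Disjoint Y) (g : ℕ → Bool) :
    ((((List.range N).filter g).map s).Perm X ∧
        (((List.range N).filter (fun j => !g j)).map s).Perm Y) ↔
      ∀ j < N, g j = !decide (s j ∈ Y) := by
  constructor
  · rintro ⟨hX, hY⟩ j hj
    cases hg : g j
    · have : s j ∈ Y :=
        hY.subset (List.mem_map_of_mem (List.mem_filter.2 ⟨List.mem_range.2 hj, by simp [hg]⟩))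
      simp [this]
    · have : s j ∈ X :=
        hX.subset (List.mem_map_of_mem (List.mem_filter.2 ⟨List.mem_range.2 hj, hg⟩))
      simpa [hg] using hXY this
  · intro h
    rw [List.filter_congr fun j hj => h j (List.mem_range.1 hj),
      List.filter_congr fun j hj => congrArg (! ·) (h j (List.mem_range.1 hj))]
    simp only [Bool.not_not]
    exact ⟨by simpa only [List.filter_map, Function.comp_def] using hperm.filter_notMem_right hXY,
      by simpa only [List.filter_map, Function.comp_def] using hperm.filter_mem_right hXY⟩

theorem topRow_perm_and_bottomRow_perm_iff {m : ℕ} {s : ℕ → ℤ} {X Y : List ℤ}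
    (hperm : ((List.range (2 * m)).map s).Perm (X ++ Y)) (hXY : X.Disjoint Y)
    (a : Fin m → Arrow) :
    ((topRow a s).Perm X ∧ (bottomRow a s).Perm Y) ↔
      a = wordOfRows m (fun j => !decide (s j ∈ Y)) := by
  rw [(topRow_perm a s).congr_left, (bottomRow_perm a s).congr_left,
    map_filter_perm_iff hperm hXY, eq_wordOfRows_iff]

theorem wordOfRows_isPath {m : ℕ} (hm : 0 < m) {B : ℕ → Prop} [DecidablePred B]
    (hodd : ∀ k < m, Nat.count B (2 * k + 1) = k) (hall : Nat.count B (2 * m) = m - 1) :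
    startRow (aget (wordOfRows m (fun j => !decide (B j))) 0) = true ∧
      (∀ i, i + 1 < m → startRow (aget (wordOfRows m (fun j => !decide (B j))) (i + 1)) =
        !endRow (aget (wordOfRows m (fun j => !decide (B j))) i)) ∧
      endRow (aget (wordOfRows m (fun j => !decide (B j))) (m - 1)) = true := by
  refine ⟨?_, fun i hi => ?_, ?_⟩
  · have := hodd 0 hm
    rw [Nat.count_succ] at this
    simpa [aget_wordOfRows _ hm] using this
  · have h1 := hodd i (by omega)
    have h2 := hodd (i + 1) hi
    rw [show 2 * (i + 1) + 1 = 2 * i + 1 + 1 + 1 by ring, Nat.count_succ, Nat.count_succ, h1] at h2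
    rw [aget_wordOfRows _ hi, aget_wordOfRows _ (by omega), Arrow.startRow_ofRows,
      Arrow.endRow_ofRows, show 2 * (i + 1) = 2 * i + 1 + 1 by ring]
    by_cases hB1 : B (2 * i + 1) <;> by_cases hB2 : B (2 * i + 1 + 1) <;> simp_all
  · have h1 := hodd (m - 1) (by omega)
    rw [show 2 * m = 2 * (m - 1) + 1 + 1 by omega, Nat.count_succ, h1] at hall
    simpa [aget_wordOfRows _ (show m - 1 < m by omega)] using hall

theorem WeaklyDecr.antitoneOn {k : ℕ} {a : ℕ → ℤ} (h : WeaklyDecr k a) :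
    AntitoneOn a (Set.Iio k) :=
  antitoneOn_of_succ_le Set.ordConnected_Iio fun i _ _ hi => h i hi

theorem WeaklyDecr.lt_count_iff {k : ℕ} {a : ℕ → ℤ} (h : WeaklyDecr k a) {i : ℕ} (hi : i < k)
    (v : ℤ) : i < Nat.count (fun j => v ≤ a j) k ↔ v ≤ a i := by
  constructor
  · intro hlt
    by_contra! hai
    have htail : Nat.count (fun j => v ≤ a (i + j)) (k - i) = 0 :=
      Nat.count_iff_forall_not.2 fun j hj hv =>
        (hv.trans (h.antitoneOn (by simp; omega) (by simp; omega) (by omega))).not_gt hai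
    have := Nat.count_add (fun j => v ≤ a j) i (k - i)
    rw [htail, Nat.add_sub_cancel' hi.le] at this
    have := Nat.count_le (p := fun j => v ≤ a j) (n := i)
    omega
  · intro hv
    have hhead : Nat.count (fun j => v ≤ a j) (i + 1) = i + 1 :=
      Nat.count_iff_forall.2 fun j hj =>
        hv.trans (h.antitoneOn (by simp; omega) (by simpa using hi) (by omega))
    have := Nat.count_monotone (fun j => v ≤ a j) (show i + 1 ≤ k from hi)
    omega

theorem WeaklyDecr.count_le_count_add {kα kβ d : ℕ} {α β : ℕ → ℤ} (hα : WeaklyDecr kα α)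
    (hβ : WeaklyDecr kβ β) (h : ∀ i, i + d < kα → i < kβ ∧ α (i + d) ≤ β i) (v : ℤ) :
    Nat.count (fun j => v ≤ α j) kα ≤ Nat.count (fun j => v ≤ β j) kβ + d := by
  set c := Nat.count (fun j => v ≤ α j) kα
  by_contra! hc
  have hlast : c - 1 - d + d < kα := by
    have := Nat.count_le (p := fun j => v ≤ α j) (n := kα)
    omega
  obtain ⟨hi, hαβ⟩ := h (c - 1 - d) hlast
  have hvα : v ≤ α (c - 1 - d + d) := (hα.lt_count_iff hlast v).1 (by omega)
  have := (hβ.lt_count_iff hi v).2 (hvα.trans hαβ)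
  omega

theorem DoublyInterlaces.count_le_count {n : ℕ} {mu lam : ℕ → ℤ} (hd : DoublyInterlaces n mu lam)
    (hlam : WeaklyDecr n lam) (hmu : WeaklyDecr (n - 2) mu) (v : ℤ) :
    Nat.count (fun j => v ≤ mu j) (n - 2) ≤ Nat.count (fun j => v ≤ lam j) n := by
  obtain ⟨κ, -, hκlam, hmuκ⟩ := hd
  refine hmu.count_le_count_add (d := 0) hlam (fun i hi => ⟨by omega, ?_⟩) v
  exact (hmuκ i (by omega)).1.trans (hκlam i (by omega)).1

theorem DoublyInterlaces.count_le_count_add_two {n : ℕ} {mu lam : ℕ → ℤ}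
    (hd : DoublyInterlaces n mu lam) (hlam : WeaklyDecr n lam) (hmu : WeaklyDecr (n - 2) mu)
    (v : ℤ) : Nat.count (fun j => v ≤ lam j) n ≤ Nat.count (fun j => v ≤ mu j) (n - 2) + 2 := by
  obtain ⟨κ, -, hκlam, hmuκ⟩ := hd
  refine hlam.count_le_count_add hmu (fun i hi => ⟨by omega, ?_⟩) v
  exact (hκlam (i + 1) hi).2.trans (hmuκ i (by omega)).2

theorem List.countP_map_range {α : Type*} (f : ℕ → α) (p : α → Prop) [DecidablePred p]
    (m : ℕ) :
    ((List.range m).map f).countP (fun x => decide (p x)) = Nat.count (fun i => p (f i)) m := by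
  induction m with
  | zero => simp
  | succ m ih => simp [List.range_succ, Nat.count_succ, ih]

theorem WeaklyDecr.strictAntiOn_of_nodup {k : ℕ} {a : ℕ → ℤ} (h : WeaklyDecr k a)
    (hnd : ((List.range k).map a).Nodup) : StrictAntiOn a (Set.Iio k) :=
  h.antitoneOn.strictAntiOn_of_injOn fun i hi j hj hij =>
    (List.nodup_map_iff_inj_on List.nodup_range).1 hnd i (by simpa using hi) j (by simpa using hj)
      hij

theorem StrictAntiOn.count_and_le {N j : ℕ} {s : ℕ → ℤ} (hs : StrictAntiOn s (Set.Iio N))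
    (hj : j < N) (P : ℕ → Prop) [DecidablePred P] :
    Nat.count (fun i => P i ∧ s j ≤ s i) N = Nat.count P (j + 1) := by
  simp only [Nat.count_eq_card_filter_range]
  congr 1
  ext i
  simp only [Finset.mem_filter, Finset.mem_range]
  constructor
  · rintro ⟨hi, hP, hle⟩
    exact ⟨Nat.lt_succ_of_le ((hs.le_iff_ge hj hi).1 hle), hP⟩
  · rintro ⟨hi, hP⟩
    exact ⟨by omega, hP, (hs.le_iff_ge hj (show i < N by omega)).2 (by omega)⟩

section Rearrangement

variable {N j : ℕ} {s : ℕ → ℤ} {X Y : List ℤ}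

theorem countP_ge_add_countP_ge (hperm : ((List.range N).map s).Perm (X ++ Y))
    (hs : StrictAntiOn s (Set.Iio N)) (hj : j < N) :
    X.countP (fun x => s j ≤ x) + Y.countP (fun x => s j ≤ x) = j + 1 := by
  rw [← List.countP_append, ← hperm.countP_eq, List.countP_map_range]
  simpa using hs.count_and_le hj (fun _ => True)

theorem count_mem_succ_eq_countP_ge (hperm : ((List.range N).map s).Perm (X ++ Y))
    (hXY : X.Disjoint Y) (hs : StrictAntiOn s (Set.Iio N)) (hj : j < N) :
    Nat.count (fun i => s i ∈ Y) (j + 1) = Y.countP (fun x => s j ≤ x) := by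
  have := hperm.countP_eq (fun x => decide (x ∈ Y ∧ s j ≤ x))
  rw [List.countP_map_range, hs.count_and_le hj, List.countP_append,
    List.countP_eq_zero.2 fun x hx => by simp [show x ∉ Y from hXY hx], zero_add] at this
  rw [this]
  exact List.countP_congr fun x hx => by simp [hx]

end Rearrangement

section Tiling

variable {n : ℕ} {lam mu s : ℕ → ℤ}

theorem Rearr.strictAntiOn (hs : Rearr n lam mu s)
    (hdist : (((List.range n).map lam) ++ ((List.range (n - 2)).map mu)).Nodup) :
    StrictAntiOn s (Set.Iio (2 * n - 2)) :=
  hs.1.strictAntiOn_of_nodup (hs.2.nodup_iff.2 hdist)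

theorem Rearr.count_mem_two_mul_add_one (hs : Rearr n lam mu s)
    (hdist : (((List.range n).map lam) ++ ((List.range (n - 2)).map mu)).Nodup)
    (hlam : WeaklyDecr n lam) (hmu : WeaklyDecr (n - 2) mu) (hd : DoublyInterlaces n mu lam)
    {k : ℕ} (hk : k < n - 1) :
    Nat.count (fun j => s j ∈ (List.range (n - 2)).map mu) (2 * k + 1) = k := by
  have hanti := hs.strictAntiOn hdist
  have hsum := countP_ge_add_countP_ge hs.2 hanti (j := 2 * k) (by omega)
  rw [count_mem_succ_eq_countP_ge hs.2 (List.disjoint_of_nodup_append hdist) hanti (by omega)]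
  simp only [List.countP_map_range] at hsum ⊢
  have := hd.count_le_count hlam hmu (s (2 * k))
  have := hd.count_le_count_add_two hlam hmu (s (2 * k))
  omega

theorem Rearr.count_mem_two_mul_sub_two (hs : Rearr n lam mu s)
    (hdist : (((List.range n).map lam) ++ ((List.range (n - 2)).map mu)).Nodup)
    (hlam : WeaklyDecr n lam) (hmu : WeaklyDecr (n - 2) mu) (hd : DoublyInterlaces n mu lam)
    (hn : 2 ≤ n) : Nat.count (fun j => s j ∈ (List.range (n - 2)).map mu) (2 * n - 2) = n - 2 := by
  have hodd := hs.count_mem_two_mul_add_one hdist hlam hmu hd (k := n - 2) (by omega)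
  have htotal := count_mem_succ_eq_countP_ge hs.2 (List.disjoint_of_nodup_append hdist)
    (hs.strictAntiOn hdist) (j := 2 * n - 3) (by omega)
  rw [show 2 * n - 3 + 1 = 2 * n - 2 by omega] at htotal
  have := List.countP_le_length (p := fun x => decide (s (2 * n - 3) ≤ x))
    (l := (List.range (n - 2)).map mu)
  have := Nat.count_monotone (fun j => s j ∈ (List.range (n - 2)).map mu)
    (show 2 * (n - 2) + 1 ≤ 2 * n - 2 by omega)
  simp only [List.length_map, List.length_range] at *
  omega

end Tiling

theorem stmt_18_general (n : ℕ) (hn : 2 ≤ n) (lam mu s : ℕ → ℤ)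
    (hlam : WeaklyDecr n lam)
    (hmu : WeaklyDecr (n - 2) mu)
    (hd : DoublyInterlaces n mu lam)
    (hs : Rearr n lam mu s)
    (hdist : (((List.range n).map lam) ++ ((List.range (n - 2)).map mu)).Nodup) :
    ∃! a : Fin (n - 1) → Arrow,
      (startRow (aget a 0) = true ∧
        (∀ i : ℕ, i + 1 < n - 1 → startRow (aget a (i + 1)) = !endRow (aget a i)) ∧
        endRow (aget a (n - 2)) = true) ∧
      ((((List.range (n - 1)).filter (fun i => startRow (aget a i))).map
            (fun i => s (2 * i)) ++
          ((List.range (n - 1)).filter (fun i => endRow (aget a i))).map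
            (fun i => s (2 * i + 1))).Perm
        ((List.range n).map lam)) ∧
      ((((List.range (n - 1)).filter (fun i => !startRow (aget a i))).map
            (fun i => s (2 * i)) ++
          ((List.range (n - 1)).filter (fun i => !endRow (aget a i))).map
            (fun i => s (2 * i + 1))).Perm
        ((List.range (n - 2)).map mu)) := by
  have hperm : ((List.range (2 * (n - 1))).map s).Perm
      ((List.range n).map lam ++ (List.range (n - 2)).map mu) := by
    rw [show 2 * (n - 1) = 2 * n - 2 by omega]
    exact hs.2
  have hrows := topRow_perm_and_bottomRow_perm_iff hperm (List.disjoint_of_nodup_append hdist)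
  obtain ⟨hstart, hturn, hend⟩ := wordOfRows_isPath (m := n - 1) (by omega)
    (fun k hk => hs.count_mem_two_mul_add_one hdist hlam hmu hd hk)
    (by rw [show 2 * (n - 1) = 2 * n - 2 by omega, Nat.sub_sub]
        exact hs.count_mem_two_mul_sub_two hdist hlam hmu hd hn)
  rw [Nat.sub_sub] at hend
  exact ⟨_, ⟨⟨hstart, hturn, hend⟩, (hrows _).2 rfl⟩, fun a ha => (hrows a).1 ha.2⟩

/-- If the `2n-2` entries of `λ` and `μ` are all distinct, there is a unique
word `w` of length `n-1` in the arrows `{↘, ⇀, ⇁, ↗}` (starting on the top line,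
with consecutive arrows on opposite lines at each shared column, ending on the
top line) whose tiling — block `i` placing `x_i = s(2i)` on the start row and
`z_i = s(2i+1)` on the end row — puts exactly the entries of `λ` on the top row
and exactly the entries of `μ` on the bottom row. -/
theorem stmt_18 (n : ℕ) (hn : 2 ≤ n) (lam mu s : ℕ → ℤ)
    (hlam : WeaklyDecr n lam) (hlam0 : NonnegSeq n lam)
    (hmu : WeaklyDecr (n - 2) mu) (hmu0 : NonnegSeq (n - 2) mu)
    (hd : DoublyInterlaces n mu lam)
    (hs : Rearr n lam mu s)
    (hdist : (((List.range n).map lam) ++ ((List.range (n - 2)).map mu)).Nodup) :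
    ∃! a : Fin (n - 1) → Arrow,
      (startRow (aget a 0) = true ∧
        (∀ i : ℕ, i + 1 < n - 1 → startRow (aget a (i + 1)) = !endRow (aget a i)) ∧
        endRow (aget a (n - 2)) = true) ∧
      ((((List.range (n - 1)).filter (fun i => startRow (aget a i))).map
            (fun i => s (2 * i)) ++
          ((List.range (n - 1)).filter (fun i => endRow (aget a i))).map
            (fun i => s (2 * i + 1))).Perm
        ((List.range n).map lam)) ∧
      ((((List.range (n - 1)).filter (fun i => !startRow (aget a i))).map
            (fun i => s (2 * i)) ++
          ((List.range (n - 1)).filter (fun i => !endRow (aget a i))).map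
            (fun i => s (2 * i + 1))).Perm
        ((List.range (n - 2)).map mu)) :=
  stmt_18_general n hn lam mu s hlam hmu hd hs hdist
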